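/- arXiv:1310.4939 — 2 statements merged into one kernel-verified Lean document; each statement's English description precedes it below -/
import Mathlib

section
/- Let f, g, h : X^n → ℝ be arbitrary functions on a finite set X^n, let a ≥ 0 and b ≥ 0, and define Ω* = {x : f(x) + a·g(x) ≤ b·h(x)}. If Ω ⊆ X^n satisfies ∑_{x∈Ω} g(x) ≤ ∑_{x∈Ω*} g(x) and ∑_{x∈Ωᶜ} h(x) ≤ ∑_{x∈(Ω*)ᶜ} h(x), then ∑_{x∈Ω*} f(x) ≤ ∑_{x∈Ω} f(x). -/
/-!
With `φ = f + a g - b h`, the set `Ω*` is the sublevel set `{φ ≤ 0}`, and a sublevel set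
minimises `∑ φ` over all subsets, since it collects exactly the nonpositive terms. Expanding
`∑_{Ω*} φ ≤ ∑_Ω φ` and using `a, b ≥ 0` together with the hypotheses on `g` and `h` (the one on `h`
rewritten through complements) leaves `∑_{Ω*} f ≤ ∑_Ω f`.
-/

open Finset

theorem Finset.sum_filter_nonpos_le_sum {ι M : Type*} [Fintype ι]
    [AddCommMonoid M] [LinearOrder M] [IsOrderedAddMonoid M] (φ : ι → M) (s : Finset ι) :
    ∑ i ∈ univ.filter (φ · ≤ 0), φ i ≤ ∑ i ∈ s, φ i :=
  calc ∑ i ∈ univ.filter (φ · ≤ 0), φ i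
      = ∑ i, min (φ i) 0 := by simp only [sum_filter, min_def]
    _ ≤ ∑ i ∈ s, min (φ i) 0 :=
        sum_le_sum_of_subset_of_nonpos' (subset_univ s) fun i _ _ => min_le_right _ _
    _ ≤ ∑ i ∈ s, φ i := sum_le_sum fun i _ => min_le_left _ _

theorem Finset.sum_le_sum_of_sum_compl_le {ι M : Type*} [Fintype ι] [DecidableEq ι]
    [AddCommMonoid M] [PartialOrder M] [IsOrderedCancelAddMonoid M] {h : ι → M} {s t : Finset ι}
    (hst : ∑ i ∈ sᶜ, h i ≤ ∑ i ∈ tᶜ, h i) : ∑ i ∈ t, h i ≤ ∑ i ∈ s, h i := by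
  refine le_of_add_le_add_left (a := ∑ i ∈ sᶜ, h i) ?_
  calc ∑ i ∈ sᶜ, h i + ∑ i ∈ t, h i
      ≤ ∑ i ∈ tᶜ, h i + ∑ i ∈ t, h i := by gcongr
    _ = ∑ i ∈ sᶜ, h i + ∑ i ∈ s, h i := by rw [sum_compl_add_sum, sum_compl_add_sum]

theorem extended_neyman_pearson {X : Type*} [Fintype X] [DecidableEq X]
    (f g h : X → ℝ) (a b : ℝ) (ha : 0 ≤ a) (hb : 0 ≤ b)
    (Ωstar : Finset X) (hΩstar : Ωstar = univ.filter (fun x => f x + a * g x ≤ b * h x))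
    (Ω : Finset X)
    (hg : ∑ x ∈ Ω, g x ≤ ∑ x ∈ Ωstar, g x)
    (hh : ∑ x ∈ Ωᶜ, h x ≤ ∑ x ∈ Ωstarᶜ, h x) :
    ∑ x ∈ Ωstar, f x ≤ ∑ x ∈ Ω, f x := by
  set φ : X → ℝ := fun x => f x + a * g x - b * h x
  have hΩstar_φ : Ωstar = univ.filter (φ · ≤ 0) := by
    simp only [hΩstar, φ, sub_nonpos]
  have expand (s : Finset X) :
      ∑ x ∈ s, φ x = ∑ x ∈ s, f x + a * ∑ x ∈ s, g x - b * ∑ x ∈ s, h x := by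
    simp only [φ, sum_sub_distrib, sum_add_distrib, mul_sum]
  have hφ := sum_filter_nonpos_le_sum φ Ω
  rw [← hΩstar_φ, expand, expand] at hφ
  have hag := mul_le_mul_of_nonneg_left hg ha
  have hbh := mul_le_mul_of_nonneg_left (sum_le_sum_of_sum_compl_le hh) hb
  linarith
end

section
/- Let P be a probability distribution on a finite set Ω with P(x) > 0 for all x, and let θ > 0. Among all length functions L : Ω → ℝ≥0 satisfying Kraft's inequality ∑_{x∈Ω} 2^{−L(x)} ≤ 1 (ignoring integer constraints), the minimum of ∑_{x∈Ω} P(x)·2^{θL(x)} is achieved by L*(x) = −log₂( P(x)^{1/(1+θ)} / ∑_{x'∈Ω} P(x')^{1/(1+θ)} ), and the minimum value equals ( ∑_{x∈Ω} P(x)^{1/(1+θ)} )^{1+θ}. -/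
/-!
With `u x = 2 ^ (-L x)`, the weighted Hölder inequality with weights `u` and exponent
`1 + θ` gives `(∑ P ^ (1 / (1 + θ))) ^ (1 + θ) ≤ (∑ u) ^ θ * ∑ P * u ^ (-θ)`, and the last
sum is the exponential moment `∑ P * 2 ^ (θ * L)`; Kraft's inequality `∑ u ≤ 1` turns this
into the lower bound. Hölder is an equality when `u` is proportional to `P ^ (1 / (1 + θ))`,
which is the choice `u = 2 ^ (-L*)`.
-/

open Finset

theorem rpow_mul_eq_rpow_neg_rpow_neg {b : ℝ} (hb : 0 ≤ b) (θ L : ℝ) :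
    b ^ (θ * L) = (b ^ (-L)) ^ (-θ) := by
  rw [← Real.rpow_mul hb, neg_mul_neg, mul_comm]

section
variable {ι : Type*} (s : Finset ι) {θ : ℝ}

theorem rpow_sum_rpow_le_mul_sum_mul_rpow_neg (hθ : 0 ≤ θ) {P u : ι → ℝ}
    (hP : ∀ i, 0 ≤ P i) (hu : ∀ i, 0 < u i) :
    (∑ i ∈ s, P i ^ (1 / (1 + θ))) ^ (1 + θ) ≤
      (∑ i ∈ s, u i) ^ θ * ∑ i ∈ s, P i * u i ^ (-θ) := by
  have hp : (0 : ℝ) < 1 + θ := by linarith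
  have h_inner : ∀ i, u i * (P i ^ (1 / (1 + θ)) / u i) = P i ^ (1 / (1 + θ)) :=
    fun i => mul_div_cancel₀ _ (hu i).ne'
  have h_weighted_pow :
      ∀ i, u i * (P i ^ (1 / (1 + θ)) / u i) ^ (1 + θ) = P i * u i ^ (-θ) := by
    intro i
    rw [Real.div_rpow (Real.rpow_nonneg (hP i) _) (hu i).le, ← Real.rpow_mul (hP i),
      one_div_mul_cancel hp.ne', Real.rpow_one, show -θ = 1 - (1 + θ) by ring,
      Real.rpow_sub (hu i), Real.rpow_one]
    ring
  have holder := Real.inner_le_weight_mul_Lp_of_nonneg s (p := 1 + θ) (by linarith) u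
    (fun i => P i ^ (1 / (1 + θ)) / u i) (fun i => (hu i).le)
    (fun i => div_nonneg (Real.rpow_nonneg (hP i) _) (hu i).le)
  simp only [h_inner, h_weighted_pow] at holder
  have hS : 0 ≤ ∑ i ∈ s, P i * u i ^ (-θ) :=
    sum_nonneg fun i _ => mul_nonneg (hP i) (Real.rpow_nonneg (hu i).le _)
  have hU : 0 ≤ ∑ i ∈ s, u i := sum_nonneg fun i _ => (hu i).le
  calc (∑ i ∈ s, P i ^ (1 / (1 + θ))) ^ (1 + θ)
      ≤ ((∑ i ∈ s, u i) ^ (1 - (1 + θ)⁻¹) *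
          (∑ i ∈ s, P i * u i ^ (-θ)) ^ (1 + θ)⁻¹) ^ (1 + θ) :=
        Real.rpow_le_rpow (sum_nonneg fun i _ => Real.rpow_nonneg (hP i) _) holder hp.le
    _ = (∑ i ∈ s, u i) ^ θ * ∑ i ∈ s, P i * u i ^ (-θ) := by
        rw [Real.mul_rpow (Real.rpow_nonneg hU _) (Real.rpow_nonneg hS _), ← Real.rpow_mul hU,
          Real.rpow_inv_rpow hS hp.ne']
        congr 2
        field_simp
        ring

theorem sum_mul_div_sum_rpow_neg (hθ : 0 ≤ θ) {P : ι → ℝ} (hP : ∀ i, 0 < P i) :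
    ∑ i ∈ s, P i * (P i ^ (1 / (1 + θ)) / ∑ j ∈ s, P j ^ (1 / (1 + θ))) ^ (-θ) =
      (∑ i ∈ s, P i ^ (1 / (1 + θ))) ^ (1 + θ) := by
  set S := ∑ j ∈ s, P j ^ (1 / (1 + θ))
  have hp : (0 : ℝ) < 1 + θ := by linarith
  have hS : 0 ≤ S := sum_nonneg fun i _ => Real.rpow_nonneg (hP i).le _
  have hterm : ∀ i ∈ s,
      P i * (P i ^ (1 / (1 + θ)) / S) ^ (-θ) = P i ^ (1 / (1 + θ)) * S ^ θ := by
    intro i hi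
    have hq : 0 < P i ^ (1 / (1 + θ)) := Real.rpow_pos_of_pos (hP i) _
    have hSpos : 0 < S :=
      hq.trans_le (single_le_sum (fun j _ => Real.rpow_nonneg (hP j).le _) hi)
    have hPq : P i = P i ^ (1 / (1 + θ)) * (P i ^ (1 / (1 + θ))) ^ θ := by
      rw [← Real.rpow_one_add' hq.le (by linarith), ← Real.rpow_mul (hP i).le,
        one_div_mul_cancel hp.ne', Real.rpow_one]
    rw [Real.rpow_neg (div_pos hq hSpos).le, Real.div_rpow hq.le hSpos.le]
    nth_rewrite 1 [hPq]
    field_simp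
  rw [sum_congr rfl hterm, ← sum_mul, ← Real.rpow_one_add' hS hp.ne']

end

theorem optimal_length_exponential_moment_general {Ω : Type*} [Fintype Ω]
    (P : Ω → ℝ) (hP : ∀ x, 0 < P x)
    (θ : ℝ) (hθ : 0 < θ)
    (Lstar : Ω → ℝ)
    (hLstar : Lstar = fun x =>
      - Real.logb 2 (P x ^ (1 / (1 + θ)) / ∑ x', P x' ^ (1 / (1 + θ)))) :
    (∀ x, 0 ≤ Lstar x) ∧
    (∑ x, (2 : ℝ) ^ (-(Lstar x)) ≤ 1) ∧
    (∑ x, P x * (2 : ℝ) ^ (θ * Lstar x) = (∑ x, P x ^ (1 / (1 + θ))) ^ (1 + θ)) ∧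
    (∀ L : Ω → ℝ, (∀ x, 0 ≤ L x) → ∑ x, (2 : ℝ) ^ (-(L x)) ≤ 1 →
      (∑ x, P x ^ (1 / (1 + θ))) ^ (1 + θ) ≤ ∑ x, P x * (2 : ℝ) ^ (θ * L x)) := by
  set S := ∑ x, P x ^ (1 / (1 + θ))
  have hq : ∀ x, 0 < P x ^ (1 / (1 + θ)) := fun x => Real.rpow_pos_of_pos (hP x) _
  have hqS : ∀ x, P x ^ (1 / (1 + θ)) ≤ S := fun x =>
    single_le_sum (fun y _ => (hq y).le) (mem_univ x)
  have hu : ∀ x, 0 < P x ^ (1 / (1 + θ)) / S := fun x =>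
    div_pos (hq x) ((hq x).trans_le (hqS x))
  have hKraft : ∀ x, (2 : ℝ) ^ (-(Lstar x)) = P x ^ (1 / (1 + θ)) / S := fun x => by
    rw [hLstar, neg_neg, Real.rpow_logb two_pos (by norm_num) (hu x)]
  refine ⟨fun x => ?_, ?_, ?_, fun L _ hL => ?_⟩
  · rw [hLstar, neg_nonneg]
    exact Real.logb_nonpos one_lt_two (hu x).le
      (div_le_one_of_le₀ (hqS x) ((hq x).le.trans (hqS x)))
  · simp_rw [hKraft, ← sum_div]
    exact div_self_le_one S
  · simp_rw [rpow_mul_eq_rpow_neg_rpow_neg zero_le_two θ, hKraft]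
    exact sum_mul_div_sum_rpow_neg univ hθ.le hP
  · simp_rw [rpow_mul_eq_rpow_neg_rpow_neg zero_le_two θ]
    calc S ^ (1 + θ)
        ≤ (∑ x, (2 : ℝ) ^ (-L x)) ^ θ * ∑ x, P x * ((2 : ℝ) ^ (-L x)) ^ (-θ) :=
          rpow_sum_rpow_le_mul_sum_mul_rpow_neg univ hθ.le (fun x => (hP x).le)
            (fun x => Real.rpow_pos_of_pos two_pos _)
      _ ≤ ∑ x, P x * ((2 : ℝ) ^ (-L x)) ^ (-θ) := by
          refine mul_le_of_le_one_left (sum_nonneg fun x _ => ?_) ?_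
          · exact mul_nonneg (hP x).le (Real.rpow_nonneg (Real.rpow_nonneg zero_le_two _) _)
          · exact Real.rpow_le_one (sum_nonneg fun x _ => Real.rpow_nonneg zero_le_two _) hL hθ.le

/-- Optimal length function for the exponential-moment criterion, subject to
Kraft's inequality (non-integer lengths allowed). -/
theorem optimal_length_exponential_moment {Ω : Type*} [Fintype Ω] [Nonempty Ω]
    (P : Ω → ℝ) (hP : ∀ x, 0 < P x) (hsum : ∑ x, P x = 1)
    (θ : ℝ) (hθ : 0 < θ)
    (Lstar : Ω → ℝ)
    (hLstar : Lstar = fun x =>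
      - Real.logb 2 (P x ^ (1 / (1 + θ)) / ∑ x', P x' ^ (1 / (1 + θ)))) :
    (∀ x, 0 ≤ Lstar x) ∧
    (∑ x, (2 : ℝ) ^ (-(Lstar x)) ≤ 1) ∧
    (∑ x, P x * (2 : ℝ) ^ (θ * Lstar x) = (∑ x, P x ^ (1 / (1 + θ))) ^ (1 + θ)) ∧
    (∀ L : Ω → ℝ, (∀ x, 0 ≤ L x) → ∑ x, (2 : ℝ) ^ (-(L x)) ≤ 1 →
      (∑ x, P x ^ (1 / (1 + θ))) ^ (1 + θ) ≤ ∑ x, P x * (2 : ℝ) ^ (θ * L x)) :=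
  optimal_length_exponential_moment_general P hP θ hθ Lstar hLstar
end
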